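/- Let (E,T,S,e) be a conditionally ergodic conditional expectation preserving system with T strictly positive and S surjective, assume every upward directed subset D of E₊ for which {Tf : f ∈ D} is order bounded in E has a supremum in E, and assume (S,e) is aperiodic. Then for each N ∈ ℕ there exists a component c of e such that P_{Tc}e = e and S^i c ⊓ S^j c = 0 for all 0 ≤ i < j ≤ N. -/
import Mathlib


noncomputable section

open Function Set

variable {E : Type*}

/-- `e` is a weak order unit: `e > 0` and `e ⊓ |x| = 0` implies `x = 0`. -/
def WeakOrderUnit [Lattice E] [AddCommGroup E] (e : E) : Prop :=
  0 < e ∧ ∀ x : E, e ⊓ (x ⊔ -x) = 0 → x = 0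

/-- `p` is a component of `q ∈ E₊`: `0 ≤ p ≤ q` and `(q - p) ⊓ p = 0`. -/
def IsComponent [Lattice E] [AddCommGroup E] (q p : E) : Prop :=
  0 ≤ p ∧ p ≤ q ∧ (q - p) ⊓ p = 0

/-- `partialSup f n = ⋁_{j < n} f j`, with the empty supremum equal to `0`. -/
def partialSup [Lattice E] [Zero E] (f : ℕ → E) : ℕ → E
  | 0 => 0
  | n + 1 => partialSup f n ⊔ f n

/-- The band projection of `e` onto the band generated by `g`: `P_g e = ⨆_{m ∈ ℕ} (e ⊓ m•g)`. -/
def bandProjApp [ConditionallyCompleteLattice E] [AddCommGroup E] (g e : E) : E :=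
  ⨆ m : ℕ, e ⊓ m • g

/-- `qComp Sinv e p k = p ⊓ S⁻ᵏp ⊓ (e - ⋁_{j=1}^{k-1} S⁻ʲp)` (empty supremum is `0`). -/
def qComp [Lattice E] [AddCommGroup E] (Sinv : E → E) (e p : E) (k : ℕ) : E :=
  p ⊓ Sinv^[k] p ⊓ (e - partialSup (fun j => Sinv^[j + 1] p) (k - 1))

/-- `(E,T,S,e)` is a conditional expectation preserving system: `E` is a Dedekind complete
Riesz space (typeclass assumptions), `e` is a weak order unit, `T` is a strictly positive
conditional expectation operator with `Te = e`, and `S` is an order-continuous Riesz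
homomorphism with `Se = e` and `TS = T`. -/
structure IsCEPS [ConditionallyCompleteLattice E] [AddCommGroup E] [Module ℝ E]
    (T S : E →ₗ[ℝ] E) (e : E) : Prop where
  unit : WeakOrderUnit e
  T_pos : ∀ f : E, 0 ≤ f → 0 ≤ T f
  T_strictPos : ∀ f : E, 0 ≤ f → T f = 0 → f = 0
  T_proj : ∀ f : E, T (T f) = T f
  T_ordCont : ∀ D : Set E, D.Nonempty → DirectedOn (· ≥ ·) D → IsGLB D 0 →
    IsGLB ((⇑T) '' D) 0
  T_range_sublattice : ∀ x ∈ Set.range T, ∀ y ∈ Set.range T, x ⊔ y ∈ Set.range T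
  T_range_dedekind : ∀ D : Set E, D ⊆ Set.range T → D.Nonempty →
    (∃ b ∈ Set.range T, ∀ x ∈ D, x ≤ b) →
    ∃ s ∈ Set.range T, (∀ x ∈ D, x ≤ s) ∧ ∀ b ∈ Set.range T, (∀ x ∈ D, x ≤ b) → s ≤ b
  T_weakUnit : ∀ u : E, WeakOrderUnit u → WeakOrderUnit (T u)
  Te : T e = e
  S_hom : ∀ x y : E, S (x ⊔ y) = S x ⊔ S y
  S_ordCont : ∀ D : Set E, D.Nonempty → DirectedOn (· ≥ ·) D → IsGLB D 0 →
    IsGLB ((⇑S) '' D) 0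
  Se : S e = e
  TS : ∀ f : E, T (S f) = T f

/-- `E` is `T`-universally complete: every upward directed subset `D` of `E₊` for which
`T '' D` is order bounded in `E` has a supremum in `E`. -/
def TUnivComplete [ConditionallyCompleteLattice E] [AddCommGroup E] [Module ℝ E]
    (T : E →ₗ[ℝ] E) : Prop :=
  ∀ D : Set E, D.Nonempty → D ⊆ {x : E | 0 ≤ x} → DirectedOn (· ≤ ·) D →
    BddAbove ((⇑T) '' D) → BddBelow ((⇑T) '' D) → ∃ s : E, IsLUB D s

/-- `(S, v)` is aperiodic (with `Sinv` the inverse of `S`): for every `N ∈ ℕ` and every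
nonzero component `c` of `v` there exist `k ≥ N` and a component `u` of `c` with
`q(u,k) ≠ 0`. -/
def IsAperiodic [Lattice E] [AddCommGroup E] (Sinv : E → E) (e v : E) : Prop :=
  ∀ N : ℕ, ∀ c : E, IsComponent v c → c ≠ 0 →
    ∃ k : ℕ, N ≤ k ∧ ∃ u : E, IsComponent c u ∧ qComp Sinv e u k ≠ 0

/-- `(S, e)` is periodic (with `Sinv` the inverse of `S`): there is `N ∈ ℕ` such that
`q(c,k) = 0` for all `k ≥ N` and all components `c` of `e` with `0 ≠ c ≠ e`. -/
def IsPeriodic [Lattice E] [AddCommGroup E] (Sinv : E → E) (e : E) : Prop :=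
  ∃ N : ℕ, ∀ c : E, IsComponent e c → c ≠ 0 → c ≠ e → ∀ k : ℕ, N ≤ k → qComp Sinv e c k = 0

section AuxLemmas
variable {E : Type*} [ConditionallyCompleteLattice E] [AddCommGroup E]
  [CovariantClass E E (· + ·) (· ≤ ·)]

lemma my_inf_sup (a b c : E) : a ⊓ (b ⊔ c) = (a ⊓ b) ⊔ (a ⊓ c) := by
  letI := AddCommGroup.toDistribLattice E
  exact inf_sup_left a b c

lemma my_sup_inf (a b c : E) : (a ⊔ b) ⊓ c = (a ⊓ c) ⊔ (b ⊓ c) := by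
  rw [inf_comm, my_inf_sup, inf_comm, inf_comm c b]

/-- infinite distributivity in lattice-ordered groups -/
lemma my_isLUB_inf {D : Set E} {s : E} (h : IsLUB D s) (a : E) :
    IsLUB ((a ⊓ ·) '' D) (a ⊓ s) := by
  constructor
  · rintro _ ⟨d, hd, rfl⟩
    exact inf_le_inf_left a (h.1 hd)
  · intro bb hbb
    have key : ∀ d ∈ D, d ≤ bb + (a ⊔ s) - a := by
      intro d hd
      have h1 : a ⊓ d + (a ⊔ d) = a + d := inf_add_sup a d
      have h2 : a ⊔ d ≤ a ⊔ s := sup_le_sup_left (h.1 hd) a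
      have h3 : a ⊓ d ≤ bb := hbb ⟨d, hd, rfl⟩
      have h4 : a + d ≤ bb + (a ⊔ s) := h1 ▸ add_le_add h3 h2
      rw [le_sub_iff_add_le, add_comm]
      exact h4
    have hs : s ≤ bb + (a ⊔ s) - a := h.2 key
    have h6 : a + s ≤ bb + (a ⊔ s) := by
      rw [add_comm a s, ← le_sub_iff_add_le]
      exact hs
    have h5 : a ⊓ s + (a ⊔ s) ≤ bb + (a ⊔ s) := (inf_add_sup a s) ▸ h6
    exact le_of_add_le_add_right h5

lemma my_inf_add_le {x a b : E} (hx : 0 ≤ x) (ha : 0 ≤ a) (hb : 0 ≤ b) :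
    x ⊓ (a + b) ≤ x ⊓ a + x ⊓ b := by
  have h1 : x ⊓ (a + b) ≤ x ⊓ a + b := by
    have hh : x ⊓ a + b = (x + b) ⊓ (a + b) := by
      rw [add_comm (x ⊓ a) b, add_inf, add_comm b x, add_comm b a]
    rw [hh]
    exact inf_le_inf (le_add_of_nonneg_right hb) le_rfl
  have h2 : x ⊓ (a + b) ≤ x + x ⊓ a :=
    le_add_of_nonneg_right (le_inf hx ha) |>.trans' inf_le_left
  have h3 : x ⊓ (a + b) - x ⊓ a ≤ x ⊓ b := by
    apply le_inf
    · rw [sub_le_iff_le_add]; exact h2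
    · rw [sub_le_iff_le_add']; exact h1
  exact sub_le_iff_le_add'.mp h3

lemma my_nsmul_nonneg {x : E} (hx : 0 ≤ x) (n : ℕ) : 0 ≤ n • x := by
  induction n with
  | zero => simp
  | succ n ih => rw [succ_nsmul]; exact add_nonneg ih hx

lemma my_nsmul_mono {x : E} (hx : 0 ≤ x) {m n : ℕ} (h : m ≤ n) : m • x ≤ n • x := by
  obtain ⟨t, rfl⟩ := Nat.exists_eq_add_of_le h
  rw [add_nsmul]
  exact le_add_of_nonneg_right (my_nsmul_nonneg hx t)

lemma my_disj_nsmul {x y : E} (hx : 0 ≤ x) (hy : 0 ≤ y) (h : x ⊓ y = 0) (n : ℕ) :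
    x ⊓ (n • y) = 0 := by
  induction n with
  | zero => simp [inf_eq_right.mpr hx]
  | succ n ih =>
    refine le_antisymm ?_ (le_inf hx (my_nsmul_nonneg hy (n+1)))
    calc x ⊓ ((n+1) • y) = x ⊓ (n • y + y) := by rw [succ_nsmul]
    _ ≤ x ⊓ (n • y) + x ⊓ y := my_inf_add_le hx (my_nsmul_nonneg hy n) hy
    _ = 0 := by rw [ih, h, add_zero]

lemma comp_zero {e : E} (he : 0 ≤ e) : IsComponent e (0 : E) :=
  ⟨le_rfl, he, by simpa using inf_eq_right.mpr (by simpa using he)⟩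

lemma comp_inf {e p q : E} (hp : IsComponent e p) (hq : IsComponent e q) :
    IsComponent e (p ⊓ q) := by
  obtain ⟨hp0, hpe, hpd⟩ := hp
  obtain ⟨hq0, hqe, hqd⟩ := hq
  refine ⟨le_inf hp0 hq0, inf_le_left.trans hpe, ?_⟩
  have h1 : e - p ⊓ q = (e - p) ⊔ (e - q) := by rw [sub_inf]
  rw [h1, my_sup_inf]
  have h2 : (e - p) ⊓ (p ⊓ q) = 0 := by
    refine le_antisymm ?_ (le_inf (sub_nonneg.mpr hpe) (le_inf hp0 hq0))
    calc (e - p) ⊓ (p ⊓ q) ≤ (e - p) ⊓ p := inf_le_inf_left _ inf_le_left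
    _ = 0 := hpd
  have h3 : (e - q) ⊓ (p ⊓ q) = 0 := by
    refine le_antisymm ?_ (le_inf (sub_nonneg.mpr hqe) (le_inf hp0 hq0))
    calc (e - q) ⊓ (p ⊓ q) ≤ (e - q) ⊓ q := inf_le_inf_left _ inf_le_right
    _ = 0 := hqd
  rw [h2, h3, sup_idem]

lemma comp_sup {e p q : E} (hp : IsComponent e p) (hq : IsComponent e q) :
    IsComponent e (p ⊔ q) := by
  obtain ⟨hp0, hpe, hpd⟩ := hp
  obtain ⟨hq0, hqe, hqd⟩ := hq
  refine ⟨hp0.trans le_sup_left, sup_le hpe hqe, ?_⟩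
  rw [my_inf_sup]
  have h2 : (e - (p ⊔ q)) ⊓ p = 0 := by
    refine le_antisymm ?_ (le_inf (sub_nonneg.mpr (sup_le hpe hqe)) hp0)
    calc (e - (p ⊔ q)) ⊓ p ≤ (e - p) ⊓ p :=
      inf_le_inf_right _ (sub_le_sub_left le_sup_left e)
    _ = 0 := hpd
  have h3 : (e - (p ⊔ q)) ⊓ q = 0 := by
    refine le_antisymm ?_ (le_inf (sub_nonneg.mpr (sup_le hpe hqe)) hq0)
    calc (e - (p ⊔ q)) ⊓ q ≤ (e - q) ⊓ q :=
      inf_le_inf_right _ (sub_le_sub_left le_sup_right e)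
    _ = 0 := hqd
  rw [h2, h3, sup_idem]

lemma comp_trans {e b u : E} (hu : IsComponent b u) (hb : IsComponent e b) :
    IsComponent e u := by
  obtain ⟨hu0, hub, hud⟩ := hu
  obtain ⟨hb0, hbe, hbd⟩ := hb
  refine ⟨hu0, hub.trans hbe, ?_⟩
  have h1 : e - u = (e - b) + (b - u) := by abel
  refine le_antisymm ?_ (le_inf (sub_nonneg.mpr (hub.trans hbe)) hu0)
  calc (e - u) ⊓ u = u ⊓ ((e - b) + (b - u)) := by rw [h1, inf_comm]
  _ ≤ u ⊓ (e - b) + u ⊓ (b - u) :=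
      my_inf_add_le hu0 (sub_nonneg.mpr hbe) (sub_nonneg.mpr hub)
  _ ≤ (e - b) ⊓ b + (b - u) ⊓ u :=
      add_le_add (by rw [inf_comm]; exact inf_le_inf_left _ hub)
        (le_of_eq (inf_comm u (b - u)))
  _ = 0 := by rw [hbd, hud, add_zero]


section Hom
variable {S : E → E}
  (hsup : ∀ x y : E, S (x ⊔ y) = S x ⊔ S y)

include hsup in
lemma homMono : ∀ {x y : E}, x ≤ y → S x ≤ S y := by
  intro x y h
  have : S y = S x ⊔ S y := by rw [← hsup, sup_eq_right.mpr h]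
  rw [this]; exact le_sup_left

variable (hsub : ∀ x y : E, S (x - y) = S x - S y)

include hsub hsup in
lemma homInf : ∀ x y : E, S (x ⊓ y) = S x ⊓ S y := by
  intro x y
  have h1 : x ⊓ y = x - ((x - y) ⊔ 0) := by
    rw [sub_sup, sub_zero, sub_sub_cancel, inf_comm]
  have h0 : S 0 = 0 := by
    have := hsub 0 0; simpa using this
  rw [h1, hsub, hsup, h0, sub_sup, hsub, sub_zero, sub_sub_cancel, inf_comm]

include hsup hsub in
lemma homLUB
    (hcont : ∀ D : Set E, D.Nonempty → DirectedOn (· ≥ ·) D → IsGLB D 0 →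
      IsGLB (S '' D) 0)
    {D : Set E} {s : E} (hne : D.Nonempty) (hdir : DirectedOn (· ≤ ·) D)
    (h : IsLUB D s) : IsLUB (S '' D) (S s) := by
  set D' : Set E := (fun d => s - d) '' D with hD'
  have hne' : D'.Nonempty := hne.image _
  have hdir' : DirectedOn (· ≥ ·) D' := by
    rintro _ ⟨d, hd, rfl⟩ _ ⟨d', hd', rfl⟩
    obtain ⟨z, hz, hdz, hd'z⟩ := hdir d hd d' hd'
    exact ⟨s - z, ⟨z, hz, rfl⟩, sub_le_sub_left hdz s, sub_le_sub_left hd'z s⟩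
  have hglb : IsGLB D' 0 := by
    constructor
    · rintro _ ⟨d, hd, rfl⟩
      exact sub_nonneg.mpr (h.1 hd)
    · intro x hx
      have : ∀ d ∈ D, d ≤ s - x := by
        intro d hd
        have := hx ⟨d, hd, rfl⟩
        simpa [le_sub_comm] using this
      have hs : s ≤ s - x := h.2 this
      simpa using sub_nonneg.mpr hs
  have hglb' := hcont D' hne' hdir' hglb
  constructor
  · rintro _ ⟨d, hd, rfl⟩
    exact homMono hsup (h.1 hd)
  · intro bb hbb
    have hlow : S s - bb ∈ lowerBounds (S '' D') := by
      rintro _ ⟨_, ⟨d, hd, rfl⟩, rfl⟩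
      rw [hsub]
      exact sub_le_sub_left (hbb ⟨d, hd, rfl⟩) _
    have := hglb'.2 hlow
    simpa [sub_nonpos] using this

lemma iterInf (hinf : ∀ x y : E, S (x ⊓ y) = S x ⊓ S y) (n : ℕ) (x y : E) :
    S^[n] (x ⊓ y) = S^[n] x ⊓ S^[n] y := by
  induction n with
  | zero => simp
  | succ n ih => rw [Function.iterate_succ_apply', Function.iterate_succ_apply',
      Function.iterate_succ_apply', ih, hinf]

include hsup in
lemma iterSup (n : ℕ) (x y : E) :
    S^[n] (x ⊔ y) = S^[n] x ⊔ S^[n] y := by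
  induction n with
  | zero => simp
  | succ n ih => rw [Function.iterate_succ_apply', Function.iterate_succ_apply',
      Function.iterate_succ_apply', ih, hsup]

include hsub in
lemma iterSub (n : ℕ) (x y : E) :
    S^[n] (x - y) = S^[n] x - S^[n] y := by
  induction n with
  | zero => simp
  | succ n ih => rw [Function.iterate_succ_apply', Function.iterate_succ_apply',
      Function.iterate_succ_apply', ih, hsub]

include hsup in
lemma iterMono (n : ℕ) {x y : E} (h : x ≤ y) : S^[n] x ≤ S^[n] y := by
  induction n with
  | zero => simpa
  | succ n ih => rw [Function.iterate_succ_apply', Function.iterate_succ_apply']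
                 exact homMono hsup ih

include hsup hsub in
lemma iterPos (n : ℕ) {x : E} (h : 0 ≤ x) : 0 ≤ S^[n] x := by
  have h0 : S 0 = 0 := by have := hsub 0 0; simpa using this
  have := iterMono hsup n h
  rwa [Function.iterate_fixed h0] at this

include hsup hsub in
lemma iterLUB
    (hcont : ∀ D : Set E, D.Nonempty → DirectedOn (· ≥ ·) D → IsGLB D 0 →
      IsGLB (S '' D) 0)
    (n : ℕ) {D : Set E} {s : E} (hne : D.Nonempty) (hdir : DirectedOn (· ≤ ·) D)
    (h : IsLUB D s) : IsLUB (S^[n] '' D) (S^[n] s) := by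
  induction n with
  | zero => simpa
  | succ n ih =>
    rw [Function.iterate_succ', Set.image_comp]
    simp only [Function.comp_apply]
    apply homLUB hsup hsub hcont (hne.image _)
    · rintro _ ⟨d, hd, rfl⟩ _ ⟨d', hd', rfl⟩
      obtain ⟨z, hz, hdz, hd'z⟩ := hdir d hd d' hd'
      exact ⟨S^[n] z, ⟨z, hz, rfl⟩, iterMono hsup n hdz, iterMono hsup n hd'z⟩
    · exact ih

end Hom

section PartialSup
variable {E : Type*} [ConditionallyCompleteLattice E] [AddCommGroup E]
  [CovariantClass E E (· + ·) (· ≤ ·)]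

lemma partialSup_comp {e : E} (f : ℕ → E) (hf : ∀ j, IsComponent e (f j)) (he : 0 ≤ e)
    (n : ℕ) : IsComponent e (partialSup f n) := by
  induction n with
  | zero => exact comp_zero he
  | succ n ih => exact comp_sup ih (hf n)

lemma le_partialSup (f : ℕ → E) {m n : ℕ} (h : m < n) : f m ≤ partialSup f n := by
  induction n with
  | zero => omega
  | succ n ih =>
    rcases Nat.lt_succ_iff_lt_or_eq.mp h with h' | rfl
    · exact (ih h').trans le_sup_left
    · exact le_sup_right

end PartialSup

end AuxLemmas


/-- For each `N` there is a component `c` of `e` with `P_{Tc}e = e` whose first `N+1`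
iterates under `S` are pairwise disjoint. -/
theorem aperiodic_disjoint_iterates {E : Type*} [ConditionallyCompleteLattice E]
    [AddCommGroup E] [Module ℝ E] [CovariantClass E E (· + ·) (· ≤ ·)] [PosSMulMono ℝ E]
    (T S : E →ₗ[ℝ] E) (e : E) (hCEPS : IsCEPS T S e)
    (hErg : {f : E | S f = f} = Set.range T)
    (hTuc : TUnivComplete T)
    (hS : Function.Surjective ⇑S)
    (hAp : IsAperiodic (Function.surjInv hS) e e)
    (N : ℕ) :
    ∃ c : E, IsComponent e c ∧ bandProjApp (T c) e = e ∧
      ∀ i j : ℕ, i < j → j ≤ N → (⇑S)^[i] c ⊓ (⇑S)^[j] c = 0 := by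
  classical
  obtain ⟨heu, _⟩ := hCEPS.unit
  have he : (0:E) ≤ e := heu.le
  -- basic properties of S
  have hSsup := hCEPS.S_hom
  have hSsub : ∀ x y : E, S (x - y) = S x - S y := fun x y => map_sub S x y
  have hSinf := homInf hSsup hSsub
  have hSmono : ∀ {x y : E}, x ≤ y → S x ≤ S y := fun h => homMono hSsup h
  -- T is monotone
  have hTmono : ∀ {x y : E}, x ≤ y → T x ≤ T y := by
    intro x y h
    have h1 := hCEPS.T_pos (y - x) (sub_nonneg.mpr h)
    rw [map_sub] at h1
    exact sub_nonneg.mp h1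
  -- S is injective
  have hSinj : Function.Injective ⇑S := by
    have key : ∀ a : E, S a = 0 → a ≤ 0 := by
      intro a ha
      have h1 : S (a ⊔ 0) = 0 := by rw [hSsup, ha, map_zero, sup_idem]
      have h2 : T (a ⊔ 0) = 0 := by rw [← hCEPS.TS, h1, map_zero]
      have h3 : a ⊔ 0 = 0 := hCEPS.T_strictPos _ le_sup_right h2
      exact le_sup_left.trans h3.le
    intro x y hxy
    have h1 : x - y ≤ 0 := key _ (by rw [hSsub, hxy, sub_self])
    have h2 : y - x ≤ 0 := key _ (by rw [hSsub, hxy, sub_self])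
    exact le_antisymm (sub_nonpos.mp h1) (sub_nonpos.mp h2)
  -- properties of the inverse of S
  set Si : E → E := Function.surjInv hS with hSidef
  have hSiR : ∀ x, S (Si x) = x := fun x => Function.surjInv_eq hS x
  have hSisub : ∀ x y : E, Si (x - y) = Si x - Si y := fun x y =>
    hSinj (by rw [hSiR, map_sub, hSiR, hSiR])
  have hSisup : ∀ x y : E, Si (x ⊔ y) = Si x ⊔ Si y := fun x y =>
    hSinj (by rw [hSiR, hSsup, hSiR, hSiR])
  have hSiinf := homInf hSisup hSisub
  have hSie : Si e = e := hSinj (by rw [hSiR, hCEPS.Se])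
  have hSi0 : Si 0 = 0 := hSinj (by rw [hSiR, map_zero])
  have hSSi : ∀ (n : ℕ) (x : E), (⇑S)^[n] (Si^[n] x) = x := by
    intro n x
    exact (Function.rightInverse_surjInv hS).iterate n x
  have hSiComp : ∀ (n : ℕ) {p : E}, IsComponent e p → IsComponent e (Si^[n] p) := by
    intro n p hp
    obtain ⟨h0, h1, h2⟩ := hp
    refine ⟨?_, ?_, ?_⟩
    · have := iterMono hSisup n h0
      rwa [Function.iterate_fixed hSi0 n] at this
    · have := iterMono hSisup n h1
      rwa [Function.iterate_fixed hSie n] at this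
    · have h3 : Si^[n] ((e - p) ⊓ p) = 0 := by
        rw [h2, Function.iterate_fixed hSi0 n]
      rwa [iterInf hSiinf, iterSub hSisub, Function.iterate_fixed hSie n] at h3
  -- fixed points of S
  have hfix : ∀ f : E, S (T f) = T f := by
    intro f
    have h1 : T f ∈ Set.range ⇑T := ⟨f, rfl⟩
    rw [← hErg] at h1
    exact h1
  have hSpos : ∀ {x : E}, 0 ≤ x → 0 ≤ (⇑S) x := by
    intro x hx
    have := hSmono hx
    rwa [map_zero] at this
  -- the Zorn family
  set C : Set E := {x | IsComponent e x ∧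
      ∀ i j : ℕ, i < j → j ≤ N → (⇑S)^[i] x ⊓ (⇑S)^[j] x = 0} with hCdef
  have h0C : (0:E) ∈ C := by
    refine ⟨comp_zero he, fun i j _ _ => ?_⟩
    rw [Function.iterate_fixed (map_zero S) i, Function.iterate_fixed (map_zero S) j,
      inf_idem]
  have hzorn : ∃ m, (0:E) ≤ m ∧ Maximal (· ∈ C) m := by
    apply zorn_le_nonempty₀ C ?_ 0 h0C
    intro ch hchC hchain y hy
    have hne : ch.Nonempty := ⟨y, hy⟩
    have hbdd : BddAbove ch := ⟨e, fun z hz => (hchC hz).1.2.1⟩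
    have hlub : IsLUB ch (sSup ch) := isLUB_csSup hne hbdd
    set s := sSup ch with hsdef
    have hs0 : (0:E) ≤ s := ((hchC hy).1.1).trans (hlub.1 hy)
    have hse : s ≤ e := csSup_le hne fun z hz => (hchC hz).1.2.1
    refine ⟨s, ⟨⟨hs0, hse, ?_⟩, ?_⟩, fun z hz => hlub.1 hz⟩
    · -- s is a component of e
      have hL := my_isLUB_inf hlub (e - s)
      refine le_antisymm (hL.2 ?_) (le_inf (sub_nonneg.mpr hse) hs0)
      rintro _ ⟨d, hd, rfl⟩
      calc (e - s) ⊓ d ≤ (e - d) ⊓ d :=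
        inf_le_inf_right d (sub_le_sub_left (hlub.1 hd) e)
      _ = 0 := (hchC hd).1.2.2
    · -- iterates of s are disjoint
      intro i j hij hjN
      have hdir : DirectedOn (· ≤ ·) ch := hchain.directedOn
      have hiter : ∀ n : ℕ, IsLUB ((⇑S)^[n] '' ch) ((⇑S)^[n] s) := fun n =>
        iterLUB hSsup hSsub hCEPS.S_ordCont n hne hdir hlub
      refine le_antisymm ?_ (le_inf (iterPos hSsup hSsub i hs0) (iterPos hSsup hSsub j hs0))
      have hLj := my_isLUB_inf (hiter j) ((⇑S)^[i] s)
      apply hLj.2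
      rintro _ ⟨_, ⟨d, hd, rfl⟩, rfl⟩
      show (⇑S)^[i] s ⊓ (⇑S)^[j] d ≤ 0
      have hLi := my_isLUB_inf (hiter i) ((⇑S)^[j] d)
      rw [inf_comm]
      apply hLi.2
      rintro _ ⟨_, ⟨d', hd', rfl⟩, rfl⟩
      show (⇑S)^[j] d ⊓ (⇑S)^[i] d' ≤ 0
      rcases hchain.total hd hd' with h | h
      · calc (⇑S)^[j] d ⊓ (⇑S)^[i] d' ≤ (⇑S)^[j] d' ⊓ (⇑S)^[i] d' :=
          inf_le_inf_right _ (iterMono hSsup j h)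
        _ = 0 := by rw [inf_comm]; exact (hchC hd').2 i j hij hjN
      · calc (⇑S)^[j] d ⊓ (⇑S)^[i] d' ≤ (⇑S)^[j] d ⊓ (⇑S)^[i] d :=
          inf_le_inf_left _ (iterMono hSsup i h)
        _ = 0 := by rw [inf_comm]; exact (hchC hd).2 i j hij hjN
  obtain ⟨c, -, hmax⟩ := hzorn
  obtain ⟨⟨hc0, hce, hccomp⟩, hcdisj⟩ := hmax.1
  -- the band projection of e onto the band generated by T c
  have hTc0 : (0:E) ≤ T c := hCEPS.T_pos c hc0
  set fn : ℕ → E := fun m => e ⊓ m • T c with hfndef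
  have hfn_le_e : ∀ m, fn m ≤ e := fun m => inf_le_left
  have hfn0 : fn 0 = 0 := by simp [hfndef, inf_eq_right.mpr he]
  have hD0ne : (Set.range fn).Nonempty := ⟨fn 0, 0, rfl⟩
  have hD0bdd : BddAbove (Set.range fn) := ⟨e, by rintro _ ⟨m, rfl⟩; exact hfn_le_e m⟩
  set g : E := sSup (Set.range fn) with hgdef
  have hglub : IsLUB (Set.range fn) g := isLUB_csSup hD0ne hD0bdd
  have hband : bandProjApp (T c) e = g := rfl
  have hfk_le_g : ∀ m, fn m ≤ g := fun m => hglub.1 ⟨m, rfl⟩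
  have hg0 : (0:E) ≤ g := hfn0 ▸ hfk_le_g 0
  have hge : g ≤ e := csSup_le hD0ne (by rintro _ ⟨m, rfl⟩; exact hfn_le_e m)
  set b : E := e - g with hbdef
  have hb0 : (0:E) ≤ b := sub_nonneg.mpr hge
  have hbe : b ≤ e := sub_le_self e hg0
  -- b ⊓ T c = 0
  have hbTc : b ⊓ T c = 0 := by
    set w := b ⊓ T c with hwdef
    have hw0 : (0:E) ≤ w := le_inf hb0 hTc0
    have hkey : ∀ m : ℕ, fn m ≤ g - w := by
      intro m
      have h1 : w + fn m ≤ e := by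
        have : w ≤ e - fn m := inf_le_left.trans (sub_le_sub_left (hfk_le_g m) e)
        rwa [le_sub_iff_add_le] at this
      have h2 : w + fn m ≤ (m+1) • T c := by
        rw [succ_nsmul, add_comm]
        exact add_le_add inf_le_right inf_le_right
      have h3 : w + fn m ≤ fn (m+1) := le_inf h1 h2
      have h4 : w + fn m ≤ g := h3.trans (hfk_le_g (m+1))
      rw [le_sub_iff_add_le, add_comm]
      exact h4
    have h5 : g ≤ g - w := csSup_le hD0ne (by rintro _ ⟨m, rfl⟩; exact hkey m)
    have h6 : w ≤ 0 := by
      have := sub_le_sub_left h5 g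
      simpa using this
    exact le_antisymm h6 hw0
  -- S g = g
  have hSTc : S (T c) = T c := hfix c
  have hSfn : ∀ m, S (fn m) = fn m := by
    intro m
    rw [hfndef]
    simp only
    rw [hSinf, hCEPS.Se, map_nsmul, hSTc]
  have hD0dir : DirectedOn (· ≤ ·) (Set.range fn) := by
    rintro _ ⟨m, rfl⟩ _ ⟨m', rfl⟩
    refine ⟨fn (max m m'), ⟨max m m', rfl⟩, ?_, ?_⟩
    · exact inf_le_inf_left e (my_nsmul_mono hTc0 (le_max_left m m'))
    · exact inf_le_inf_left e (my_nsmul_mono hTc0 (le_max_right m m'))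
  have hSg : S g = g := by
    have h1 : IsLUB (⇑S '' Set.range fn) (S g) :=
      homLUB hSsup hSsub hCEPS.S_ordCont hD0ne hD0dir hglub
    have h2 : ⇑S '' Set.range fn = Set.range fn := by
      ext x
      constructor
      · rintro ⟨_, ⟨m, rfl⟩, rfl⟩; exact ⟨m, (hSfn m).symm ▸ rfl⟩
      · rintro ⟨m, rfl⟩; exact ⟨fn m, ⟨m, rfl⟩, hSfn m⟩
    rw [h2] at h1
    exact h1.unique hglub
  have hSb : S b = b := by rw [hbdef, map_sub, hCEPS.Se, hSg]
  -- g is a component of e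
  have hgb : b ⊓ g = 0 := by
    have hL := my_isLUB_inf hglub b
    refine le_antisymm (hL.2 ?_) (le_inf hb0 hg0)
    rintro _ ⟨_, ⟨m, rfl⟩, rfl⟩
    calc b ⊓ fn m ≤ b ⊓ m • T c := inf_le_inf_left b inf_le_right
    _ = 0 := my_disj_nsmul hb0 hTc0 hbTc m
  -- T b = b
  have hTb : T b = b := by
    have h1 : b ∈ Set.range ⇑T := by rw [← hErg]; exact hSb
    obtain ⟨y, hy⟩ := h1
    rw [← hy, hCEPS.T_proj]
  -- c ⊓ b = 0 hence c ≤ g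
  have hcb : c ⊓ b = 0 := by
    have h1 : T (c ⊓ b) ≤ T c := hTmono inf_le_left
    have h2 : T (c ⊓ b) ≤ b := by
      have := hTmono (inf_le_right : c ⊓ b ≤ b)
      rwa [hTb] at this
    have h3 : T (c ⊓ b) ≤ 0 := by
      rw [← hbTc, inf_comm b (T c)]
      exact le_inf h1 h2
    have h4 : (0:E) ≤ c ⊓ b := le_inf hc0 hb0
    exact hCEPS.T_strictPos _ h4 (le_antisymm h3 (hCEPS.T_pos _ h4))
  have hgbsum : g + b = e := by rw [hbdef]; abel
  have hcg : c ≤ g := by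
    have h1 : c ⊓ b + (c ⊔ b) = c + b := inf_add_sup c b
    have h3 : c + b = c ⊔ b := by rw [← h1, hcb, zero_add]
    have h4 : c + b ≤ g + b := by
      rw [hgbsum, h3]
      exact sup_le hce hbe
    exact le_of_add_le_add_right h4
  -- main claim : b = 0
  have hbzero : b = 0 := by
    by_contra hbne
    have hbcomp : IsComponent e b := ⟨hb0, hbe, by
      show (e - b) ⊓ b = 0
      rw [hbdef, sub_sub_cancel, inf_comm]
      exact hgb⟩
    obtain ⟨k, hk, u, hu, hq⟩ := hAp (N+1) b hbcomp hbne
    set P : E := partialSup (fun j => Si^[j + 1] u) (k - 1) with hPdef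
    set v : E := qComp Si e u k with hvdef
    have hvq : v = u ⊓ Si^[k] u ⊓ (e - P) := rfl
    have hue : IsComponent e u := comp_trans hu hbcomp
    have hu0 : (0:E) ≤ u := hue.1
    have hPcomp : IsComponent e P :=
      partialSup_comp _ (fun j => hSiComp (j+1) hue) he (k-1)
    have hvcomp : IsComponent e v := by
      rw [hvq]
      refine comp_inf (comp_inf hue (hSiComp k hue))
        ⟨sub_nonneg.mpr hPcomp.2.1, sub_le_self e hPcomp.1, ?_⟩
      rw [sub_sub_cancel, inf_comm]
      exact hPcomp.2.2
    have hv0 : (0:E) ≤ v := hvcomp.1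
    have hv_le_u : v ≤ u := by rw [hvq]; exact inf_le_left.trans inf_le_left
    have hv_le_b : v ≤ b := hv_le_u.trans hu.2.1
    -- disjointness of backward iterates
    have hvSi : ∀ d : ℕ, 1 ≤ d → d ≤ k - 1 → v ⊓ Si^[d] v = 0 := by
      intro d hd1 hdk
      have h1 : Si^[d] v ≤ Si^[d] u := iterMono hSisup d hv_le_u
      have h2 : Si^[d] u ≤ P := by
        rw [hPdef]
        have h2' : (fun j => Si^[j + 1] u) (d - 1) ≤
            partialSup (fun j => Si^[j + 1] u) (k - 1) :=
          le_partialSup (fun j => Si^[j + 1] u) (show d - 1 < k - 1 by omega)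
        simpa [Nat.sub_add_cancel hd1] using h2'
      have h3 : v ≤ e - P := by rw [hvq]; exact inf_le_right
      have h4 : v ⊓ Si^[d] v ≤ (e - P) ⊓ P := inf_le_inf h3 (h1.trans h2)
      have h5 : (0:E) ≤ Si^[d] v := by
        have := iterMono hSisup d hv0
        rwa [Function.iterate_fixed hSi0 d] at this
      exact le_antisymm (h4.trans_eq hPcomp.2.2) (le_inf hv0 h5)
    -- disjointness of forward iterates
    have hvS : ∀ i j : ℕ, i < j → j - i ≤ k - 1 → (⇑S)^[i] v ⊓ (⇑S)^[j] v = 0 := by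
      intro i j hij hjk
      set d := j - i with hddef
      have hd1 : 1 ≤ d := by omega
      have h0 : v ⊓ Si^[d] v = 0 := hvSi d hd1 hjk
      have h1 : (⇑S)^[d] (v ⊓ Si^[d] v) = 0 := by
        rw [h0, Function.iterate_fixed (map_zero S) d]
      rw [iterInf hSinf, hSSi d v] at h1
      have h2 : (⇑S)^[i] ((⇑S)^[d] v ⊓ v) = 0 := by
        rw [h1, Function.iterate_fixed (map_zero S) i]
      rw [iterInf hSinf, ← Function.iterate_add_apply] at h2
      have h3 : i + d = j := by omega
      rw [h3, inf_comm] at h2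
      exact h2
    -- cross terms
    have hSv_le_b : ∀ i : ℕ, (⇑S)^[i] v ≤ b := fun i => by
      have := iterMono hSsup i hv_le_b
      rwa [Function.iterate_fixed hSb i] at this
    have hSc_le_g : ∀ j : ℕ, (⇑S)^[j] c ≤ g := fun j => by
      have := iterMono hSsup j hcg
      rwa [Function.iterate_fixed hSg j] at this
    have hSv0 : ∀ i : ℕ, (0:E) ≤ (⇑S)^[i] v := fun i => iterPos hSsup hSsub i hv0
    have hSc0 : ∀ i : ℕ, (0:E) ≤ (⇑S)^[i] c := fun i => iterPos hSsup hSsub i hc0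
    have hcross : ∀ i j : ℕ, (⇑S)^[i] v ⊓ (⇑S)^[j] c = 0 := by
      intro i j
      refine le_antisymm ?_ (le_inf (hSv0 i) (hSc0 j))
      calc (⇑S)^[i] v ⊓ (⇑S)^[j] c ≤ b ⊓ g := inf_le_inf (hSv_le_b i) (hSc_le_g j)
      _ = 0 := hgb
    -- c ⊔ v is a strictly bigger member of C
    have hcvC : c ⊔ v ∈ C := by
      refine ⟨comp_sup ⟨hc0, hce, hccomp⟩ hvcomp, ?_⟩
      intro i j hij hjN
      have e1 := hcdisj i j hij hjN
      have e2 := hcross i j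
      have e3 : (⇑S)^[i] c ⊓ (⇑S)^[j] v = 0 := by rw [inf_comm]; exact hcross j i
      have e4 := hvS i j hij (by omega)
      rw [iterSup hSsup, iterSup hSsup, my_inf_sup, my_sup_inf, my_sup_inf, e1, e2, e3, e4]
      simp
    have hle : c ≤ c ⊔ v := le_sup_left
    have hle' : c ⊔ v ≤ c := hmax.2 hcvC hle
    have hveqc : v ≤ c := le_sup_right.trans hle'
    have hvc : v ⊓ c = 0 := by
      refine le_antisymm ?_ (le_inf hv0 hc0)
      calc v ⊓ c ≤ b ⊓ g := inf_le_inf hv_le_b hcg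
      _ = 0 := hgb
    have : v = 0 := by
      have := inf_eq_left.mpr hveqc
      rw [← this, hvc]
    exact hq this
  refine ⟨c, ⟨hc0, hce, hccomp⟩, ?_, hcdisj⟩
  rw [hband, ← sub_eq_zero]
  rw [hbdef] at hbzero
  rw [← neg_sub, hbzero, neg_zero]
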